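/- arXiv:2004.03593 — 2 statements merged into one kernel-verified Lean document; each statement's English description precedes it below -/
import Mathlib

section
/- For a normal, convex function f : [0,1] → [0,1], the left balance point b_f := sup{x : f(x) = f^L(x)} equals R¹(f) := sup{x : f^R(x) = 1}, and the right balance point c_f := inf{x : f(x) = f^R(x)} equals L₁(f) := inf{x : f^L(x) = 1}. -/
open Set Classical

noncomputable section

/-- Left envelope: `f^L(x) = sup {f y : 0 ≤ y ≤ x}`. -/
def fL (f : ℝ → ℝ) (x : ℝ) : ℝ := sSup (f '' Set.Icc 0 x)

/-- Weak left envelope: `f^{Lw}(x) = sup {f y : 0 ≤ y < x}` (for `x ∈ (0,1]`). -/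
def fLw (f : ℝ → ℝ) (x : ℝ) : ℝ := sSup (f '' Set.Ico 0 x)

/-- Right envelope: `f^R(x) = sup {f y : x ≤ y ≤ 1}`. -/
def fR (f : ℝ → ℝ) (x : ℝ) : ℝ := sSup (f '' Set.Icc x 1)

/-- `f` maps `[0,1]` into `[0,1]`. -/
def MapsI (f : ℝ → ℝ) : Prop := ∀ x ∈ Set.Icc (0:ℝ) 1, f x ∈ Set.Icc (0:ℝ) 1

/-- `f` is normal: `sup f = 1` on `[0,1]`. -/
def NormalFn (f : ℝ → ℝ) : Prop := sSup (f '' Set.Icc 0 1) = 1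

/-- `f` is convex: `f y ≥ min (f x) (f z)` whenever `0 ≤ x ≤ y ≤ z ≤ 1`. -/
def ConvexFn (f : ℝ → ℝ) : Prop :=
  ∀ x y z : ℝ, 0 ≤ x → x ≤ y → y ≤ z → z ≤ 1 → min (f x) (f z) ≤ f y

/-- Convolution intersection: `(f ⊓ g)(x) = sup {min (f y) (g z) : min y z = x}`. -/
def inter (f g : ℝ → ℝ) (x : ℝ) : ℝ :=
  sSup {v | ∃ y ∈ Set.Icc (0:ℝ) 1, ∃ z ∈ Set.Icc (0:ℝ) 1, min y z = x ∧ v = min (f y) (g z)}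

/-- Convolution union: `(f ⊔ g)(x) = sup {min (f y) (g z) : max y z = x}`. -/
def union (f g : ℝ → ℝ) (x : ℝ) : ℝ :=
  sSup {v | ∃ y ∈ Set.Icc (0:ℝ) 1, ∃ z ∈ Set.Icc (0:ℝ) 1, max y z = x ∧ v = min (f y) (g z)}

/-- `L₁(f) = inf {x ∈ [0,1] : f^L(x) = 1}`. -/
def L1 (f : ℝ → ℝ) : ℝ := sInf {x ∈ Set.Icc (0:ℝ) 1 | fL f x = 1}

/-- `R¹(f) = sup {x ∈ [0,1] : f^R(x) = 1}`. -/
def R1 (f : ℝ → ℝ) : ℝ := sSup {x ∈ Set.Icc (0:ℝ) 1 | fR f x = 1}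

/-- The characteristic function `1_{{1}}`. -/
def ind1 : ℝ → ℝ := fun x => if x = 1 then 1 else 0

/-- The modified intersection `f ⋆ g`. -/
def star (f g : ℝ → ℝ) : ℝ → ℝ :=
  if Set.EqOn f ind1 (Set.Icc (0:ℝ) 1) then g
  else if Set.EqOn g ind1 (Set.Icc (0:ℝ) 1) then f
  else if min (f 1) (g 1) = 1 then inter f g
  else fun x => if x = 1 then 0 else inter f g x

/-! A convex `f` satisfies `f = min f^L f^R`, while normality gives `max f^L f^R = 1`.
Hence `f x = f^L x` iff `f^L x ≤ f^R x` iff `f^R x = 1`, and symmetrically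
`f x = f^R x` iff `f^L x = 1`: the sets defining `b_f` and `R¹(f)` (resp. `c_f` and `L₁(f)`)
coincide. -/

section Envelopes

variable {f : ℝ → ℝ} {x : ℝ}

theorem MapsI.bddAbove_image (hf : MapsI f) {s : Set ℝ} (hs : s ⊆ Icc 0 1) :
    BddAbove (f '' s) :=
  ⟨1, by rintro _ ⟨y, hy, rfl⟩; exact (hf y (hs hy)).2⟩

theorem le_fL (hb : BddAbove (f '' Icc 0 1)) (hx : x ∈ Icc (0 : ℝ) 1) : f x ≤ fL f x :=
  le_csSup (hb.mono (image_mono (Icc_subset_Icc le_rfl hx.2))) ⟨x, ⟨hx.1, le_rfl⟩, rfl⟩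

theorem le_fR (hb : BddAbove (f '' Icc 0 1)) (hx : x ∈ Icc (0 : ℝ) 1) : f x ≤ fR f x :=
  le_csSup (hb.mono (image_mono (Icc_subset_Icc hx.1 le_rfl))) ⟨x, ⟨le_rfl, hx.2⟩, rfl⟩

theorem NormalFn.max_fL_fR_eq_one (hfn : NormalFn f) (hb : BddAbove (f '' Icc 0 1))
    (hx : x ∈ Icc (0 : ℝ) 1) : max (fL f x) (fR f x) = 1 := by
  rw [fL, fR, ← csSup_union (hb.mono (image_mono (Icc_subset_Icc le_rfl hx.2)))
    ((nonempty_Icc.2 hx.1).image f) (hb.mono (image_mono (Icc_subset_Icc hx.1 le_rfl)))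
    ((nonempty_Icc.2 hx.2).image f), ← image_union, Icc_union_Icc_eq_Icc hx.1 hx.2, hfn]

theorem ConvexFn.min_fL_fR_le (hfc : ConvexFn f) (hx : x ∈ Icc (0 : ℝ) 1) :
    min (fL f x) (fR f x) ≤ f x := by
  by_contra! hlt
  obtain ⟨_, ⟨y, hy, rfl⟩, hy_gt⟩ :=
    exists_lt_of_lt_csSup ((nonempty_Icc.2 hx.1).image f) (lt_min_iff.mp hlt).1
  obtain ⟨_, ⟨z, hz, rfl⟩, hz_gt⟩ :=
    exists_lt_of_lt_csSup ((nonempty_Icc.2 hx.2).image f) (lt_min_iff.mp hlt).2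
  exact (hfc y x z hy.1 hy.2 hz.1 hz.2).not_gt (lt_min hy_gt hz_gt)

theorem ConvexFn.eq_min_fL_fR (hfc : ConvexFn f) (hb : BddAbove (f '' Icc 0 1))
    (hx : x ∈ Icc (0 : ℝ) 1) : f x = min (fL f x) (fR f x) :=
  le_antisymm (le_min (le_fL hb hx) (le_fR hb hx)) (hfc.min_fL_fR_le hx)

theorem ConvexFn.eq_fL_iff_fR_eq_one (hfc : ConvexFn f) (hfn : NormalFn f)
    (hb : BddAbove (f '' Icc 0 1)) (hx : x ∈ Icc (0 : ℝ) 1) : f x = fL f x ↔ fR f x = 1 := by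
  rw [hfc.eq_min_fL_fR hb hx, min_eq_left_iff, ← max_eq_right_iff,
    hfn.max_fL_fR_eq_one hb hx, eq_comm]

theorem ConvexFn.eq_fR_iff_fL_eq_one (hfc : ConvexFn f) (hfn : NormalFn f)
    (hb : BddAbove (f '' Icc 0 1)) (hx : x ∈ Icc (0 : ℝ) 1) : f x = fR f x ↔ fL f x = 1 := by
  rw [hfc.eq_min_fL_fR hb hx, min_eq_right_iff, ← max_eq_left_iff,
    hfn.max_fL_fR_eq_one hb hx, eq_comm]

end Envelopes

/-- for normal convex `f`, the left balance point
`b_f = sup {x : f x = f^L x}` equals `R¹(f)`, and the right balance point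
`c_f = inf {x : f x = f^R x}` equals `L₁(f)`. -/
theorem stmt_4 (f : ℝ → ℝ) (hf : MapsI f) (hfn : NormalFn f) (hfc : ConvexFn f) :
    sSup {x ∈ Set.Icc (0:ℝ) 1 | f x = fL f x} = R1 f ∧
    sInf {x ∈ Set.Icc (0:ℝ) 1 | f x = fR f x} = L1 f := by
  have hb := hf.bddAbove_image subset_rfl
  exact ⟨congrArg sSup (ext fun _ => and_congr_right (hfc.eq_fL_iff_fR_eq_one hfn hb)),
    congrArg sInf (ext fun _ => and_congr_right (hfc.eq_fR_iff_fL_eq_one hfn hb))⟩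
end
end

section
/- For normal, convex functions f, g : [0,1] → [0,1], the left envelope of f ⋆ g coincides with that of f ⊓ g: (f ⋆ g)^L = (f ⊓ g)^L, where ⋆ is defined by f ⋆ g = f ⊓ g if min(f(1), g(1)) = 1 and otherwise (f ⋆ g)(x) = (f ⊓ g)(x) for x < 1 and (f ⋆ g)(1) = 0 (with the convention f ⋆ 1_{1} = f, 1_{1} ⋆ g = g). -/
open Set Classical

noncomputable section

/-!
If `f` or `g` is `1_{1}`, then `f ⊓ g` is the other function on `[0,1]`. Otherwise `f ⋆ g` differs
from `f ⊓ g` at most at `1`, so the envelopes agree on `[0,1)`. At `1` both envelopes are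
`max (value at 1) (f ⊓ g)^{Lw}(1)`, and when `c = min (f 1) (g 1) < 1`, normality gives `y, z`
with `f y, g z > c`; then `min y z < 1` and `(f ⊓ g)(min y z) > c`, so the value at `1`
(`c` or `0`) is absorbed by `(f ⊓ g)^{Lw}(1)`.
-/

section Envelopes

variable {h₁ h₂ : ℝ → ℝ} {x : ℝ}

lemma fL_eq_of_eqOn (h : EqOn h₁ h₂ (Icc 0 x)) : fL h₁ x = fL h₂ x := by
  rw [fL, fL, image_congr h]

lemma fLw_eq_of_eqOn (h : EqOn h₁ h₂ (Ico 0 x)) : fLw h₁ x = fLw h₂ x := by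
  rw [fLw, fLw, image_congr h]

lemma fL_eq_max_fLw (hx : 0 < x) (hb : BddAbove (h₁ '' Ico 0 x)) :
    fL h₁ x = max (h₁ x) (fLw h₁ x) := by
  rw [fL, fLw, ← Ico_insert_right hx.le, image_insert_eq,
    csSup_insert hb ((nonempty_Ico.2 hx).image h₁)]

end Envelopes

section Inter

variable {f g : ℝ → ℝ}

lemma inter_comm (f g : ℝ → ℝ) : inter f g = inter g f := by
  funext x
  unfold inter
  congr 1
  ext v
  constructor <;>
  · rintro ⟨y, hy, z, hz, hm, rfl⟩
    exact ⟨z, hz, y, hy, by rwa [min_comm], min_comm _ _⟩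

lemma inter_le_one (hf : MapsI f) (x : ℝ) : inter f g x ≤ 1 := by
  refine Real.sSup_le ?_ zero_le_one
  rintro v ⟨y, hy, z, -, -, rfl⟩
  exact (min_le_left _ _).trans (hf y hy).2

lemma min_le_inter (hf : MapsI f) {y z : ℝ} (hy : y ∈ Icc (0:ℝ) 1) (hz : z ∈ Icc (0:ℝ) 1) :
    min (f y) (g z) ≤ inter f g (min y z) :=
  le_csSup ⟨1, by rintro v ⟨y, hy, z, -, -, rfl⟩; exact (min_le_left _ _).trans (hf y hy).2⟩
    ⟨y, hy, z, hz, rfl, rfl⟩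

lemma inter_one : inter f g 1 = min (f 1) (g 1) := by
  refine IsGreatest.csSup_eq ⟨⟨1, right_mem_Icc.2 zero_le_one, 1, right_mem_Icc.2 zero_le_one,
    min_self 1, rfl⟩, ?_⟩
  rintro v ⟨y, hy, z, hz, hm, rfl⟩
  rw [le_antisymm hy.2 (hm ▸ min_le_left y z), le_antisymm hz.2 (hm ▸ min_le_right y z)]

lemma inter_eq_right_of_eqOn_ind1 (hg : MapsI g) (hfi : EqOn f ind1 (Icc (0:ℝ) 1))
    {x : ℝ} (hx : x ∈ Icc (0:ℝ) 1) : inter f g x = g x := by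
  have h1 : (1:ℝ) ∈ Icc (0:ℝ) 1 := right_mem_Icc.2 zero_le_one
  have hf1 : f 1 = 1 := by simpa [ind1] using hfi h1
  refine IsGreatest.csSup_eq ⟨⟨1, h1, x, hx, min_eq_right hx.2, ?_⟩, ?_⟩
  · rw [hf1, min_eq_right (hg x hx).2]
  rintro v ⟨y, hy, z, hz, hm, rfl⟩
  by_cases hy1 : y = 1
  · subst hy1
    rw [← hm, min_eq_right hz.2]
    exact min_le_right _ _
  · have hfy : f y = 0 := by simpa [ind1, hy1] using hfi hy
    rw [hfy]
    exact (min_le_left _ _).trans (hg x hx).1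

lemma inter_eq_left_of_eqOn_ind1 (hf : MapsI f) (hgi : EqOn g ind1 (Icc (0:ℝ) 1))
    {x : ℝ} (hx : x ∈ Icc (0:ℝ) 1) : inter f g x = f x := by
  rw [_root_.inter_comm, inter_eq_right_of_eqOn_ind1 hf hgi hx]

lemma min_apply_one_le_fLw_inter (hf : MapsI f) (hfn : NormalFn f) (hgn : NormalFn g)
    (hc : min (f 1) (g 1) < 1) : min (f 1) (g 1) ≤ fLw (inter f g) 1 := by
  have hI : (Icc (0:ℝ) 1).Nonempty := nonempty_Icc.2 zero_le_one
  obtain ⟨_, ⟨y, hy, rfl⟩, hfy⟩ := exists_lt_of_lt_csSup (hI.image f) (hc.trans_eq hfn.symm)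
  obtain ⟨_, ⟨z, hz, rfl⟩, hgz⟩ := exists_lt_of_lt_csSup (hI.image g) (hc.trans_eq hgn.symm)
  have hw : min y z < 1 := by
    refine (min_le_left y z |>.trans hy.2).lt_of_ne fun hw => ?_
    rw [le_antisymm hy.2 (hw ▸ min_le_left y z)] at hfy
    rw [le_antisymm hz.2 (hw ▸ min_le_right y z)] at hgz
    exact (lt_min hfy hgz).false
  calc min (f 1) (g 1) ≤ min (f y) (g z) := le_min hfy.le hgz.le
    _ ≤ inter f g (min y z) := min_le_inter hf hy hz
    _ ≤ fLw (inter f g) 1 :=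
      le_csSup ⟨1, forall_mem_image.2 fun _ _ => inter_le_one hf _⟩
        ⟨min y z, ⟨le_min hy.1 hz.1, hw⟩, rfl⟩

end Inter

theorem stmt_13_general (f g : ℝ → ℝ) (hf : MapsI f) (hg : MapsI g)
    (hfn : NormalFn f) (hgn : NormalFn g) :
    Set.EqOn (fL (star f g)) (fL (inter f g)) (Set.Icc (0:ℝ) 1) := by
  unfold _root_.star
  split_ifs with hfi hgi hmin
  · exact fun x hx => fL_eq_of_eqOn fun y hy =>
      (inter_eq_right_of_eqOn_ind1 hg hfi ⟨hy.1, hy.2.trans hx.2⟩).symm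
  · exact fun x hx => fL_eq_of_eqOn fun y hy =>
      (inter_eq_left_of_eqOn_ind1 hf hgi ⟨hy.1, hy.2.trans hx.2⟩).symm
  · exact fun _ _ => rfl
  intro x hx
  rcases hx.2.lt_or_eq with hx1 | rfl
  · exact fL_eq_of_eqOn fun y hy => if_neg (hy.2.trans_lt hx1).ne
  have h1 : (1:ℝ) ∈ Icc (0:ℝ) 1 := right_mem_Icc.2 zero_le_one
  have hc : min (f 1) (g 1) < 1 := ((min_le_left _ _).trans (hf 1 h1).2).lt_of_ne hmin
  have hcLw := min_apply_one_le_fLw_inter hf hfn hgn hc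
  have hS : EqOn (fun x => if x = 1 then 0 else inter f g x) (inter f g) (Ico 0 1) :=
    fun y hy => if_neg hy.2.ne
  have hbdd : BddAbove (inter f g '' Ico 0 1) :=
    ⟨1, forall_mem_image.2 fun _ _ => inter_le_one hf _⟩
  rw [fL_eq_max_fLw one_pos (image_congr hS ▸ hbdd), fL_eq_max_fLw one_pos hbdd,
    fLw_eq_of_eqOn hS, if_pos rfl, inter_one, max_eq_right hcLw,
    max_eq_right ((le_min (hf 1 h1).1 (hg 1 h1).1).trans hcLw)]

/-- `(f ⋆ g)^L = (f ⊓ g)^L` on `[0,1]` for normal convex `f, g`. -/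
theorem stmt_13 (f g : ℝ → ℝ) (hf : MapsI f) (hg : MapsI g)
    (hfn : NormalFn f) (hfc : ConvexFn f) (hgn : NormalFn g) (hgc : ConvexFn g) :
    Set.EqOn (fL (star f g)) (fL (inter f g)) (Set.Icc (0:ℝ) 1) :=
  stmt_13_general f g hf hg hfn hgn
end
end
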